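/- Let Q be a self-join-free CQ over schema (R, Delta) such that its FD-extension Q+ is acyclic but not free-connex, and let (x, z_1, ..., z_k, y) be a head-path of Q+. Then there exist sets of variables V_x, V_y, V_z of Q+ such that: (1) x in V_x, y in V_y, and {z_1,...,z_k} subseteq V_z; (2) for every FD U -> v in Delta_{Q+} with v in V_alpha (alpha in {x,y,z}), U intersects V_alpha; (3) for every atom R of Q+, var(R) is disjoint from V_x or var(R) is disjoint from V_y; (4) V_z is disjoint from free(Q+). -/

import Mathlib

structure CQHypergraph (V : Type*) where
  edges : Set (Set V)
  nonempty_of_mem : ∀ e ∈ edges, e.Nonempty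

namespace CQHypergraph

variable {V : Type*}

/-- The vertex set of a hypergraph: all vertices occurring in some edge. -/
def vertexSet (H : CQHypergraph V) : Set V := ⋃ e ∈ H.edges, e

/-- Two vertices are neighbors if they appear together in some edge. -/
def Neighbors (H : CQHypergraph V) (u v : V) : Prop := ∃ e ∈ H.edges, u ∈ e ∧ v ∈ e

/-- A clique: a set of pairwise neighboring vertices. -/
def IsClique (H : CQHypergraph V) (C : Set V) : Prop := ∀ u ∈ C, ∀ v ∈ C, H.Neighbors u v

/-- Conformal: every clique is contained in some edge. -/
def Conformal (H : CQHypergraph V) : Prop := ∀ C : Set V, H.IsClique C → ∃ e ∈ H.edges, C ⊆ e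

/-- A chordless cycle (x_1, ..., x_n), n ≥ 3, of distinct vertices: the neighboring
pairs among them are exactly the consecutive (cyclically) ones. -/
def HasChordlessCycle (H : CQHypergraph V) : Prop :=
  ∃ (n : ℕ) (x : Fin (n + 3) → V), Function.Injective x ∧
    (∀ i, x i ∈ H.vertexSet) ∧
    ∀ i j : Fin (n + 3), i ≠ j → (H.Neighbors (x i) (x j) ↔ (j = i + 1 ∨ i = j + 1))

/-- A join tree: a tree on the edges of `H` such that for each vertex the set of
edges containing it induces a connected subtree (running intersection property). -/
def IsJoinTree (H : CQHypergraph V) (T : SimpleGraph ↥H.edges) : Prop :=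
  T.IsTree ∧ ∀ v ∈ H.vertexSet, (T.induce {e : ↥H.edges | v ∈ e.1}).Connected

/-- A hypergraph is acyclic if it admits a join tree. -/
def Acyclic (H : CQHypergraph V) : Prop := ∃ T : SimpleGraph ↥H.edges, H.IsJoinTree T

end CQHypergraph
/-- An abstract conjunctive query: a list of atoms (each given by its set of
variables) together with the set of free (head) variables. -/
structure Query (Var : Type*) where
  atoms : List (Set Var)
  free : Set Var

namespace Query

variable {Var : Type*}

def varSet (Q : Query Var) : Set Var := {v | ∃ e ∈ Q.atoms, v ∈ e}

/-- The hypergraph `H(Q)` of a query: vertices are variables, edges are the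
variable sets of the atoms. -/
def hypergraph (Q : Query Var) : CQHypergraph Var where
  edges := {e | e ∈ Q.atoms ∧ e.Nonempty}
  nonempty_of_mem := fun _ he => he.2

/-- `H(Q)` with the head added as an extra edge. -/
def headHypergraph (Q : Query Var) : CQHypergraph Var where
  edges := {e | (e ∈ Q.atoms ∨ e = Q.free) ∧ e.Nonempty}
  nonempty_of_mem := fun _ he => he.2

def Acyclic (Q : Query Var) : Prop := Q.hypergraph.Acyclic

def FreeConnex (Q : Query Var) : Prop := Q.hypergraph.Acyclic ∧ Q.headHypergraph.Acyclic

end Query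

/-- One extension step of a query according to a functional dependency `X → y`
(identified with variables; the FD must be witnessed by some atom containing
`X ∪ {y}`): either some atom containing `X` but not `y` gets `y` appended (and
other atoms -- e.g. those with the same relation symbol -- may get a fresh
variable appended), or the head containing `X` but not `y` gets `y` appended. -/
inductive ExtStep {Var : Type*} (Δ : Set (Set Var × Var)) : Query Var → Query Var → Prop
  | atomExt (Q Q' : Query Var) (X : Set Var) (y : Var) (i : ℕ) :
      (X, y) ∈ Δ →
      (∃ e ∈ Q.atoms, X ⊆ e ∧ y ∈ e) →
      i < Q.atoms.length →
      X ⊆ Q.atoms.getD i ∅ →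
      y ∉ Q.atoms.getD i ∅ →
      Q'.atoms.length = Q.atoms.length →
      Q'.atoms.getD i ∅ = Q.atoms.getD i ∅ ∪ {y} →
      (∀ j, j < Q.atoms.length → j ≠ i →
        Q'.atoms.getD j ∅ = Q.atoms.getD j ∅ ∨
        ∃ t : Var, t ∉ Q.varSet ∧ t ∉ Q.free ∧ t ≠ y ∧
          (∀ l, l < Q.atoms.length → l ≠ j → t ∉ Q'.atoms.getD l ∅) ∧
          Q'.atoms.getD j ∅ = Q.atoms.getD j ∅ ∪ {t}) →
      Q'.free = Q.free →
      ExtStep Δ Q Q'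
  | headExt (Q Q' : Query Var) (X : Set Var) (y : Var) :
      (X, y) ∈ Δ →
      (∃ e ∈ Q.atoms, X ⊆ e ∧ y ∈ e) →
      X ⊆ Q.free →
      y ∉ Q.free →
      Q'.atoms = Q.atoms →
      Q'.free = Q.free ∪ {y} →
      ExtStep Δ Q Q'

/-- `Qp` is the FD-extension of `Q` w.r.t. `Δ`: it is obtained from `Q` by a
sequence of extension steps, and no further extension step applies (fixpoint). -/
def IsFDExtension {Var : Type*} (Δ : Set (Set Var × Var)) (Q Qp : Query Var) : Prop :=
  Relation.ReflTransGen (ExtStep Δ) Q Qp ∧ ∀ Q' : Query Var, ¬ ExtStep Δ Qp Q'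
/-- A head-path `(x, z_1, ..., z_k, y)`, `k ≥ 1`, for a hypergraph `H` with free
vertices `F`: a chordless path of distinct vertices, whose endpoints `x = v 0`
and `y = v (k+1)` are free and whose middle vertices are not free; consecutive
vertices co-occur in some edge, non-consecutive ones do not. -/
structure HeadPath {V : Type*} (H : CQHypergraph V) (F : Set V) (k : ℕ) where
  v : Fin (k + 2) → V
  kpos : 1 ≤ k
  inj : Function.Injective v
  first_free : v 0 ∈ F
  last_free : v (Fin.last (k + 1)) ∈ F
  mid_not_free : ∀ i : Fin (k + 2), i ≠ 0 → i ≠ Fin.last (k + 1) → v i ∉ F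
  consec : ∀ i : Fin (k + 1), H.Neighbors (v i.castSucc) (v i.succ)
  chordless : ∀ i j : Fin (k + 2), (i : ℕ) + 1 < (j : ℕ) → ¬ H.Neighbors (v i) (v j)

/-!
Cut the join tree of `Q⁺` at an edge `pq` of the tree path from an atom containing `x` to one
containing `y`, namely where `x` stops occurring. Take `V_x` (resp. `V_y`) to be the variables
all of whose atoms lie on the side of `p` (resp. `q`), and `V_z` all non-free variables. By the
running intersection property, a variable occurring on both sides lies in `q`; so if an FD
`U → v` had `v ∈ V_x` and `U ∩ V_x = ∅`, then `U ⊆ q`, and closure of `Q⁺` under the FDs would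
put `v` into `q`, which is not on the side of `p`. For `V_z` the same role is played by the
closure of the head under the FDs.
-/

namespace SimpleGraph

variable {V : Type*} {G : SimpleGraph V}

lemma IsAcyclic.not_reachable_deleteEdges (hG : G.IsAcyclic) {p q : V} (hpq : G.Adj p q) :
    ¬ (G.deleteEdges {s(p, q)}).Reachable p q :=
  isBridge_iff.mp (isAcyclic_iff_forall_adj_isBridge.mp hG hpq)

lemma Walk.IsPath.exists_adj_reachable_deleteEdges {a b : V} {w : G.Walk a b} (hw : w.IsPath)
    (P : V → Prop) (ha : P a) (hb : ¬ P b) :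
    ∃ p q, G.Adj p q ∧ P p ∧ ¬ P q ∧ (G.deleteEdges {s(p, q)}).Reachable q b := by
  induction w with
  | nil => exact absurd ha hb
  | @cons u c d huc w ih =>
    obtain ⟨hw, hu⟩ := (Walk.cons_isPath_iff huc w).mp hw
    by_cases hc : P c
    · exact ih hw hc hb
    · refine ⟨u, c, huc, ha, hc, ⟨w.toDeleteEdges {s(u, c)} ?_⟩⟩
      rintro e he rfl
      exact hu (w.fst_mem_support_of_mem_edges he)

/-- The only edge leaving the component of `p` in `G - pq` is `pq` itself. -/
lemma mem_of_preconnected_induce_of_reachable_deleteEdges {p q : V}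
    (hsep : ¬ (G.deleteEdges {s(p, q)}).Reachable p q) {A : Set V}
    (hA : (G.induce A).Preconnected) {a b : V} (ha : a ∈ A) (hb : b ∈ A)
    (hpa : (G.deleteEdges {s(p, q)}).Reachable p a)
    (hpb : ¬ (G.deleteEdges {s(p, q)}).Reachable p b) : q ∈ A := by
  obtain ⟨w⟩ := hA ⟨a, ha⟩ ⟨b, hb⟩
  obtain ⟨d, -, hfst, hsnd⟩ :=
    w.exists_boundary_dart {c | (G.deleteEdges {s(p, q)}).Reachable p c} hpa hpb
  have hadj : G.Adj d.fst d.snd := d.adj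
  by_cases hd : s((d.fst : V), d.snd) = s(p, q)
  · rcases Sym2.eq_iff.mp hd with ⟨-, h⟩ | ⟨h, -⟩
    · exact h ▸ d.snd.2
    · exact absurd (h ▸ hfst) hsep
  · exact absurd (hfst.trans (deleteEdges_adj.mpr ⟨hadj, hd⟩).reachable) hsnd

end SimpleGraph

namespace CQHypergraph

variable {V : Type*} {H : CQHypergraph V} {T : SimpleGraph H.edges}

lemma mem_vertexSet {a : V} {e : Set V} (he : e ∈ H.edges) (ha : a ∈ e) : a ∈ H.vertexSet :=
  Set.mem_biUnion he ha

def sideVertices (T : SimpleGraph H.edges) (p q : H.edges) : Set V :=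
  {a | a ∈ H.vertexSet ∧ ∀ e : H.edges, a ∈ e.1 → (T.deleteEdges {s(p, q)}).Reachable p e}

namespace IsJoinTree

variable (hT : H.IsJoinTree T) {p q : H.edges} (hpq : T.Adj p q)
include hT hpq

lemma mem_of_reachable_of_not_reachable {a : V} {e₁ e₂ : H.edges} (h₁ : a ∈ e₁.1)
    (h₂ : a ∈ e₂.1) (hr₁ : (T.deleteEdges {s(p, q)}).Reachable p e₁)
    (hr₂ : ¬ (T.deleteEdges {s(p, q)}).Reachable p e₂) : a ∈ q.1 :=
  SimpleGraph.mem_of_preconnected_induce_of_reachable_deleteEdges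
    (hT.1.isAcyclic.not_reachable_deleteEdges hpq)
    (hT.2 a (mem_vertexSet e₁.2 h₁)).preconnected (A := {e | a ∈ e.1}) h₁ h₂ hr₁ hr₂

lemma mem_sideVertices {a : V} {e₀ : H.edges} (ha : a ∈ e₀.1)
    (hr : (T.deleteEdges {s(p, q)}).Reachable p e₀) (haq : a ∉ q.1) :
    a ∈ sideVertices T p q := by
  refine ⟨mem_vertexSet e₀.2 ha, fun e he => ?_⟩
  by_contra hne
  exact haq (hT.mem_of_reachable_of_not_reachable hpq ha he hr hne)

lemma inter_sideVertices_nonempty {U : Set V} {v : V}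
    (hclosed : ∀ e ∈ H.edges, U ⊆ e → v ∈ e) {e₀ : Set V} (he₀ : e₀ ∈ H.edges)
    (hU : U ⊆ e₀) (hv : v ∈ e₀) (hvS : v ∈ sideVertices T p q) :
    (U ∩ sideVertices T p q).Nonempty := by
  by_contra hne
  have hUq : U ⊆ q.1 := by
    intro u hu
    have huS : u ∉ sideVertices T p q := fun h => hne ⟨u, hu, h⟩
    simp only [sideVertices, Set.mem_ofPred_eq, not_and, not_forall] at huS
    obtain ⟨e, hue, hne⟩ := huS (mem_vertexSet he₀ (hU hu))
    exact hT.mem_of_reachable_of_not_reachable hpq (e₁ := ⟨e₀, he₀⟩) (hU hu) hue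
      (hvS.2 _ hv) hne
  exact hT.1.isAcyclic.not_reachable_deleteEdges hpq (hvS.2 q (hclosed q q.2 hUq))

lemma inter_sideVertices_eq_empty_or (e : H.edges) :
    e.1 ∩ sideVertices T p q = ∅ ∨ e.1 ∩ sideVertices T q p = ∅ := by
  by_cases hpe : (T.deleteEdges {s(p, q)}).Reachable p e
  · refine Or.inr (Set.eq_empty_of_forall_notMem fun b ⟨hbe, hb⟩ => ?_)
    have hqe := hb.2 e hbe
    rw [Sym2.eq_swap] at hqe
    exact hT.1.isAcyclic.not_reachable_deleteEdges hpq (hpe.trans hqe.symm)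
  · exact Or.inl (Set.eq_empty_of_forall_notMem fun a ⟨hae, ha⟩ => hpe (ha.2 e hae))

end IsJoinTree

lemma IsJoinTree.exists_adj_mem_sideVertices (hT : H.IsJoinTree T) {x y : V}
    (hx : x ∈ H.vertexSet) (hy : y ∈ H.vertexSet) (hxy : ¬ H.Neighbors x y) :
    ∃ p q : H.edges, T.Adj p q ∧ x ∈ sideVertices T p q ∧ y ∈ sideVertices T q p := by
  obtain ⟨ex, hex, hxex⟩ := Set.mem_iUnion₂.mp hx
  obtain ⟨ey, hey, hyey⟩ := Set.mem_iUnion₂.mp hy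
  obtain ⟨w⟩ := hT.1.connected.preconnected ⟨ex, hex⟩ ⟨ey, hey⟩
  obtain ⟨p, q, hpq, hxp, hxq, hqey⟩ :=
    w.toPath.2.exists_adj_reachable_deleteEdges (fun e : H.edges => x ∈ e.1) hxex
      fun hxey => hxy ⟨ey, hey, hxey, hyey⟩
  refine ⟨p, q, hpq, hT.mem_sideVertices hpq hxp .rfl hxq, ?_⟩
  rw [Sym2.eq_swap] at hqey
  exact hT.mem_sideVertices hpq.symm (e₀ := ⟨ey, hey⟩) hyey hqey
    fun hyp => hxy ⟨p, p.2, hxp, hyp⟩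

end CQHypergraph

lemma HeadPath.v_mem_vertexSet {V : Type*} {H : CQHypergraph V} {F : Set V} {k : ℕ}
    (hp : HeadPath H F k) (i : Fin (k + 2)) : hp.v i ∈ H.vertexSet := by
  induction i using Fin.lastCases with
  | last =>
    obtain ⟨e, he, -, hy⟩ := hp.consec (Fin.last k)
    exact CQHypergraph.mem_vertexSet he (Fin.succ_last k ▸ hy)
  | cast i =>
    obtain ⟨e, he, hi, -⟩ := hp.consec i
    exact CQHypergraph.mem_vertexSet he hi

lemma HeadPath.not_neighbors_first_last {V : Type*} {H : CQHypergraph V} {F : Set V} {k : ℕ}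
    (hp : HeadPath H F k) : ¬ H.Neighbors (hp.v 0) (hp.v (Fin.last (k + 1))) :=
  hp.chordless _ _ (by simp only [Fin.val_zero, Fin.val_last]; have := hp.kpos; omega)

namespace Query

variable {Var : Type*} {Δ : Set (Set Var × Var)} {Q : Query Var}

lemma hypergraph_vertexSet_subset : Q.hypergraph.vertexSet ⊆ Q.varSet := by
  intro a ha
  obtain ⟨e, he, hae⟩ := Set.mem_iUnion₂.mp ha
  exact ⟨e, he.1, hae⟩

lemma mem_of_forall_not_extStep (hfix : ∀ Q', ¬ ExtStep Δ Q Q') {U : Set Var} {v : Var}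
    (hUv : (U, v) ∈ Δ) (hwit : ∃ e ∈ Q.atoms, U ⊆ e ∧ v ∈ e) {e : Set Var}
    (he : e ∈ Q.atoms) (hUe : U ⊆ e) : v ∈ e := by
  by_contra hve
  obtain ⟨i, hi, rfl⟩ := List.getElem_of_mem he
  have hi' : i < (Q.atoms.set i (Q.atoms[i] ∪ {v})).length := by simpa using hi
  refine hfix ⟨Q.atoms.set i (Q.atoms[i] ∪ {v}), Q.free⟩
    (.atomExt Q _ U v i hUv hwit hi ?_ ?_ (List.length_set ..) ?_ ?_ rfl)
  · rwa [List.getD_eq_getElem _ _ hi]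
  · rwa [List.getD_eq_getElem _ _ hi]
  · simp only [List.getD_eq_getElem _ _ hi', List.getD_eq_getElem _ _ hi,
      List.getElem_set_self]
  · intro j hj hji
    left
    have hj' : j < (Q.atoms.set i (Q.atoms[i] ∪ {v})).length := by simpa using hj
    simp only [List.getD_eq_getElem _ _ hj', List.getD_eq_getElem _ _ hj,
      List.getElem_set_ne (Ne.symm hji)]

lemma mem_free_of_forall_not_extStep (hfix : ∀ Q', ¬ ExtStep Δ Q Q') {U : Set Var} {v : Var}
    (hUv : (U, v) ∈ Δ) (hwit : ∃ e ∈ Q.atoms, U ⊆ e ∧ v ∈ e) (hU : U ⊆ Q.free) :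
    v ∈ Q.free := by
  by_contra hv
  exact hfix ⟨Q.atoms, Q.free ∪ {v}⟩ (.headExt Q _ U v hUv hwit hU hv rfl rfl)

end Query

open CQHypergraph in
theorem reduction_sets_exist_general
    {Var : Type*} (Δ : Set (Set Var × Var)) (Q Qp : Query Var)
    (hext : IsFDExtension Δ Q Qp)
    (hacyc : Qp.Acyclic)
    (k : ℕ) (hp : HeadPath Qp.hypergraph Qp.free k) :
    ∃ Vx Vy Vz : Set Var,
      Vx ⊆ Qp.varSet ∧ Vy ⊆ Qp.varSet ∧ Vz ⊆ Qp.varSet ∧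
      hp.v 0 ∈ Vx ∧ hp.v (Fin.last (k + 1)) ∈ Vy ∧
      (∀ i : Fin (k + 2), i ≠ 0 → i ≠ Fin.last (k + 1) → hp.v i ∈ Vz) ∧
      (∀ U v, (U, v) ∈ Δ → (∃ e ∈ Qp.atoms, U ⊆ e ∧ v ∈ e) →
        (v ∈ Vx → (U ∩ Vx).Nonempty) ∧
        (v ∈ Vy → (U ∩ Vy).Nonempty) ∧
        (v ∈ Vz → (U ∩ Vz).Nonempty)) ∧
      (∀ e ∈ Qp.atoms, e ∩ Vx = ∅ ∨ e ∩ Vy = ∅) ∧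
      Vz ∩ Qp.free = ∅ := by
  obtain ⟨T, hT⟩ := hacyc
  obtain ⟨p, q, hpq, hx, hy⟩ := hT.exists_adj_mem_sideVertices (hp.v_mem_vertexSet _)
    (hp.v_mem_vertexSet _) hp.not_neighbors_first_last
  have hside : ∀ {p q : Qp.hypergraph.edges}, sideVertices T p q ⊆ Qp.varSet :=
    fun h => Query.hypergraph_vertexSet_subset h.1
  refine ⟨sideVertices T p q, sideVertices T q p, Qp.varSet \ Qp.free, hside, hside,
    Set.sdiff_subset, hx, hy, fun i hi0 hil =>
      ⟨Query.hypergraph_vertexSet_subset (hp.v_mem_vertexSet i), hp.mid_not_free i hi0 hil⟩,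
    fun U v hUv hwit => ?_, fun e he => ?_, Set.sdiff_inter_self⟩
  · obtain ⟨e₀, he₀, hUe₀, hve₀⟩ := hwit
    have hclosed : ∀ e ∈ Qp.hypergraph.edges, U ⊆ e → v ∈ e := fun e he =>
      Query.mem_of_forall_not_extStep hext.2 hUv ⟨e₀, he₀, hUe₀, hve₀⟩ he.1
    have he₀' : e₀ ∈ Qp.hypergraph.edges := ⟨he₀, v, hve₀⟩
    refine ⟨hT.inter_sideVertices_nonempty hpq hclosed he₀' hUe₀ hve₀,
      hT.inter_sideVertices_nonempty hpq.symm hclosed he₀' hUe₀ hve₀, fun hv => ?_⟩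
    obtain ⟨u, hu, huf⟩ := Set.not_subset.mp fun hU =>
      hv.2 (Query.mem_free_of_forall_not_extStep hext.2 hUv ⟨e₀, he₀, hUe₀, hve₀⟩ hU)
    exact ⟨u, hu, ⟨e₀, he₀, hUe₀ hu⟩, huf⟩
  · rcases e.eq_empty_or_nonempty with rfl | hne
    · exact Or.inl (Set.empty_inter _)
    · exact hT.inter_sideVertices_eq_empty_or hpq ⟨e, he, hne⟩

/-- Let `Q` be a self-join-free CQ whose FD-extension `Qp = Q⁺` is
acyclic but not free-connex, with head-path `(x, z_1, ..., z_k, y)` (here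
`x = hp.v 0`, `y = hp.v (last)`, middle vertices the `z_i`). Then there are sets
of variables `V_x, V_y, V_z` of `Q⁺` satisfying (1) `x ∈ V_x`, `y ∈ V_y`,
`{z_1,...,z_k} ⊆ V_z`; (2) every FD `U → v` of `Δ_{Q⁺}` (i.e. of `Δ` witnessed
in `Q⁺`) with `v ∈ V_α` has `U ∩ V_α ≠ ∅`; (3) every atom is disjoint from
`V_x` or from `V_y`; (4) `V_z` is disjoint from `free(Q⁺)`. -/
theorem reduction_sets_exist
    {Var : Type*} (Δ : Set (Set Var × Var)) (Q Qp : Query Var)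
    (hext : IsFDExtension Δ Q Qp)
    (hsjf : Qp.atoms.Nodup)
    (hacyc : Qp.Acyclic) (hnfc : ¬ Qp.FreeConnex)
    (k : ℕ) (hp : HeadPath Qp.hypergraph Qp.free k) :
    ∃ Vx Vy Vz : Set Var,
      Vx ⊆ Qp.varSet ∧ Vy ⊆ Qp.varSet ∧ Vz ⊆ Qp.varSet ∧
      hp.v 0 ∈ Vx ∧ hp.v (Fin.last (k + 1)) ∈ Vy ∧
      (∀ i : Fin (k + 2), i ≠ 0 → i ≠ Fin.last (k + 1) → hp.v i ∈ Vz) ∧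
      (∀ U v, (U, v) ∈ Δ → (∃ e ∈ Qp.atoms, U ⊆ e ∧ v ∈ e) →
        (v ∈ Vx → (U ∩ Vx).Nonempty) ∧
        (v ∈ Vy → (U ∩ Vy).Nonempty) ∧
        (v ∈ Vz → (U ∩ Vz).Nonempty)) ∧
      (∀ e ∈ Qp.atoms, e ∩ Vx = ∅ ∨ e ∩ Vy = ∅) ∧
      Vz ∩ Qp.free = ∅ :=
  reduction_sets_exist_general Δ Q Qp hext hacyc k hp
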